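/- Let κ₁, κ₂ : 𝔹^m → 𝔹 be non-constant with κ₁ ⊨ κ₂ (κ₁(y)=1 implies κ₂(y)=1) and κ₁ ≠ κ₂. Define κ : 𝔹^{m+1} → 𝔹 by κ(y, x_n) = κ₂(y) if x_n = 1 and κ₁(y) if x_n = 0. For any point v = (u, 1) with κ₁(u) = κ₂(u) = 0, feature n = m+1 is irrelevant for the instance (v, 0). -/

import Mathlib

open Finset

/-- `X` is a weak abductive explanation (weak AXp) for classifier `κ` at point `v`:
every point agreeing with `v` on `X` gets the same prediction as `v`. -/
def weakAXp {n : ℕ} (κ : (Fin n → Bool) → Bool) (v : Fin n → Bool)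
    (X : Finset (Fin n)) : Prop :=
  ∀ x : Fin n → Bool, (∀ i ∈ X, x i = v i) → κ x = κ v

/-- `X` is an AXp: a subset-minimal weak AXp. -/
def AXp {n : ℕ} (κ : (Fin n → Bool) → Bool) (v : Fin n → Bool)
    (X : Finset (Fin n)) : Prop :=
  weakAXp κ v X ∧ ∀ X' ⊂ X, ¬ weakAXp κ v X'

/-- `Y` is a weak contrastive explanation (weak CXp) for `κ` at `v`:
some point agreeing with `v` outside `Y` gets a different prediction. -/
def weakCXp {n : ℕ} (κ : (Fin n → Bool) → Bool) (v : Fin n → Bool)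
    (Y : Finset (Fin n)) : Prop :=
  ∃ x : Fin n → Bool, (∀ i ∉ Y, x i = v i) ∧ κ x ≠ κ v

/-- `Y` is a CXp: a subset-minimal weak CXp. -/
def CXp {n : ℕ} (κ : (Fin n → Bool) → Bool) (v : Fin n → Bool)
    (Y : Finset (Fin n)) : Prop :=
  weakCXp κ v Y ∧ ∀ Y' ⊂ Y, ¬ weakCXp κ v Y'

/-- A feature is relevant if it occurs in some AXp. -/
def Relevant {n : ℕ} (κ : (Fin n → Bool) → Bool) (v : Fin n → Bool) (i : Fin n) : Prop :=
  ∃ X, AXp κ v X ∧ i ∈ X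

/-- A feature is irrelevant if it occurs in no AXp. -/
def Irrelevant {n : ℕ} (κ : (Fin n → Bool) → Bool) (v : Fin n → Bool) (i : Fin n) : Prop :=
  ¬ Relevant κ v i

/-- `phi κ v S` : average value of `κ` over points agreeing with `v` on `S`
(uniform distribution). -/
noncomputable def phi {n : ℕ} (κ : (Fin n → Bool) → Bool) (v : Fin n → Bool)
    (S : Finset (Fin n)) : ℝ :=
  (1 / 2 ^ (n - S.card)) *
    ∑ x ∈ Finset.univ.filter (fun x : Fin n → Bool => ∀ i ∈ S, x i = v i),
      (if κ x then (1 : ℝ) else 0)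

/-- Shapley value of feature `i` for classifier `κ` at point `v`. -/
noncomputable def Sv {n : ℕ} (κ : (Fin n → Bool) → Bool) (v : Fin n → Bool)
    (i : Fin n) : ℝ :=
  ∑ S ∈ (Finset.univ.erase i).powerset,
    ((S.card.factorial * (n - S.card - 1).factorial : ℝ) / n.factorial) *
      (phi κ v (insert i S) - phi κ v S)

/-- In the construction `κ(y,xₙ) = if xₙ then κ₂ y else κ₁ y` with `κ₁ ⊨ κ₂`,
`κ₁ ≠ κ₂` both non-constant, and `v = (u,1)` with `κ₁ u = κ₂ u = false`,
feature `n = m+1` is irrelevant. -/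
theorem stmt9 (m : ℕ) (κ₁ κ₂ : (Fin m → Bool) → Bool)
    (h1 : ∃ a b, κ₁ a ≠ κ₁ b) (h2 : ∃ a b, κ₂ a ≠ κ₂ b)
    (hent : ∀ y, κ₁ y = true → κ₂ y = true) (hne : κ₁ ≠ κ₂)
    (u : Fin m → Bool) (hu1 : κ₁ u = false) (hu2 : κ₂ u = false)
    (κ : (Fin (m + 1) → Bool) → Bool)
    (hκ : ∀ x, κ x = if x (Fin.last m) then κ₂ (fun i => x i.castSucc)
                     else κ₁ (fun i => x i.castSucc))
    (v : Fin (m + 1) → Bool) (hv : v = Fin.snoc u true) :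
    Irrelevant κ v (Fin.last m) := by
  subst hv
  rintro ⟨X, ⟨hwX, hmin⟩, hlast⟩
  apply hmin (X.erase (Fin.last m)) (Finset.erase_ssubset hlast)
  intro x hx
  have hκv : κ (Fin.snoc u true) = false := by
    rw [hκ]; simp [hu2]
  set y : Fin m → Bool := fun i => x i.castSucc with hy
  have hx' : κ (Fin.snoc y true) = false := by
    rw [hwX (Fin.snoc y true) ?_, hκv]
    intro i hi
    rcases Fin.eq_castSucc_or_eq_last i with ⟨j, rfl⟩ | rfl
    · simp only [Fin.snoc_castSucc, hy]
      simpa using hx _ (Finset.mem_erase.mpr ⟨Fin.ne_of_lt (Fin.castSucc_lt_last j), hi⟩)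
    · simp
  have h2y : κ₂ y = false := by
    rw [hκ] at hx'; simpa using hx'
  have h1y : κ₁ y = false := by
    by_contra h
    exact absurd (hent y (by simpa using h)) (by simp [h2y])
  rw [hκ, hκv]
  cases hxl : x (Fin.last m) <;> simp [hxl, h1y, h2y, hy] <;> assumption
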